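/- For x ∈ [0, (μ²+σ²)/(2μ)) with μ,σ > 0, the supremum of E_Q[|x − D|] over all probability measures Q on ℝ₊ with mean μ and second moment μ²+σ² equals μ − x + 2x·σ²/(μ²+σ²) (equivalently, x·(σ²−μ²)/(μ²+σ²) + μ), and it is attained by the two-point measure placing mass μ²/(μ²+σ²) at (μ²+σ²)/μ and mass σ²/(μ²+σ²) at 0. -/
import Mathlib


open MeasureTheory Set

/-- A two-point probability measure with mass p at d₁ and mass 1-p at d₂. -/
noncomputable def twoPoint (p d₁ d₂ : ℝ) : MeasureTheory.Measure ℝ :=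
  ENNReal.ofReal p • MeasureTheory.Measure.dirac d₁ +
    ENNReal.ofReal (1 - p) • MeasureTheory.Measure.dirac d₂

lemma integrable_dirac'' {f : ℝ → ℝ} (hf : StronglyMeasurable f) (a : ℝ) :
    Integrable f (Measure.dirac a) :=
  ⟨hf.aestronglyMeasurable, by simp [HasFiniteIntegral, lintegral_dirac]⟩

lemma integrable_twoPoint {f : ℝ → ℝ} (hf : StronglyMeasurable f) (p a b : ℝ) :
    Integrable f (twoPoint p a b) :=
  ((integrable_dirac'' hf a).smul_measure ENNReal.ofReal_ne_top).add_measure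
    ((integrable_dirac'' hf b).smul_measure ENNReal.ofReal_ne_top)

lemma integral_twoPoint {p : ℝ} (a b : ℝ) (hp : 0 ≤ p) (hp1 : p ≤ 1)
    {f : ℝ → ℝ} (hf : StronglyMeasurable f) :
    ∫ t, f t ∂(twoPoint p a b) = p * f a + (1 - p) * f b := by
  unfold twoPoint
  rw [integral_add_measure ((integrable_dirac'' hf a).smul_measure ENNReal.ofReal_ne_top)
      ((integrable_dirac'' hf b).smul_measure ENNReal.ofReal_ne_top),
    integral_smul_measure, integral_smul_measure, integral_dirac, integral_dirac,
    ENNReal.toReal_ofReal hp, ENNReal.toReal_ofReal (by linarith), smul_eq_mul, smul_eq_mul]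

/-- For 0 ≤ x < (μ²+σ²)/(2μ), the worst-case expectation of |x−D| over probability
measures on ℝ₊ with mean μ and second moment μ²+σ² equals μ − x + 2xσ²/(μ²+σ²),
attained by the two-point measure with mass σ²/(μ²+σ²) at 0 and mass μ²/(μ²+σ²)
at (μ²+σ²)/μ. -/
theorem scarf_sup_abs_small_x (μ σ x : ℝ) (hμ : 0 < μ) (hσ : 0 < σ)
    (hx0 : 0 ≤ x) (hx : x < (μ ^ 2 + σ ^ 2) / (2 * μ)) :
    (∀ Q : Measure ℝ, IsProbabilityMeasure Q → Q (Set.Ici (0:ℝ))ᶜ = 0 →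
      Integrable id Q → Integrable (fun t => t ^ 2) Q →
      (∫ t, t ∂Q) = μ → (∫ t, t ^ 2 ∂Q) = μ ^ 2 + σ ^ 2 →
      (∫ t, |x - t| ∂Q) ≤ μ - x + 2 * x * σ ^ 2 / (μ ^ 2 + σ ^ 2)) ∧
    (let Qs := twoPoint (σ ^ 2 / (μ ^ 2 + σ ^ 2)) 0 ((μ ^ 2 + σ ^ 2) / μ)
     IsProbabilityMeasure Qs ∧ Qs (Set.Ici (0:ℝ))ᶜ = 0 ∧
     Integrable id Qs ∧ Integrable (fun t => t ^ 2) Qs ∧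
     (∫ t, t ∂Qs) = μ ∧ (∫ t, t ^ 2 ∂Qs) = μ ^ 2 + σ ^ 2 ∧
     (∫ t, |x - t| ∂Qs) = μ - x + 2 * x * σ ^ 2 / (μ ^ 2 + σ ^ 2)) := by
  set S : ℝ := μ ^ 2 + σ ^ 2 with hSdef
  have hS : 0 < S := by positivity
  have hx' : x * (2 * μ) < S := (lt_div_iff₀ (by positivity)).mp hx
  constructor
  · -- upper bound part
    intro Q hQprob hQc hQ1 hQ2 hm1 hm2
    set A : ℝ := 2 * x * μ ^ 2 / S ^ 2 with hAdef
    set B : ℝ := 1 - 4 * x * μ / S with hBdef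
    set g : ℝ → ℝ := fun t => A * t ^ 2 + B * t + x with hgdef
    have hrep : ∀ t : ℝ, g t = t - x + 2 * x * (μ * t - S) ^ 2 / S ^ 2 := by
      intro t
      simp only [hgdef, hAdef, hBdef]
      field_simp
      ring
    have hg1 : Integrable (fun t => A * t ^ 2) Q := hQ2.const_mul A
    have hg2 : Integrable (fun t : ℝ => B * t) Q := hQ1.const_mul B
    have hg : Integrable g Q := (hg1.add hg2).add (integrable_const x)
    have habs : Integrable (fun t => |x - t|) Q := ((integrable_const x).sub hQ1).abs
    have hae0 : ∀ᵐ t ∂Q, (0:ℝ) ≤ t := by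
      have hset : {a : ℝ | ¬ (0:ℝ) ≤ a} = (Set.Ici (0:ℝ))ᶜ := by
        ext t; simp [not_le]
      rw [ae_iff, hset]
      exact hQc
    have hae : ∀ᵐ t ∂Q, |x - t| ≤ g t := by
      filter_upwards [hae0] with t ht
      rw [hrep t, abs_sub_le_iff]
      have hnn : 0 ≤ 2 * x * (μ * t - S) ^ 2 / S ^ 2 := by positivity
      constructor
      · have h1 : 2 * (x - t) * S ^ 2 ≤ 2 * x * (μ * t - S) ^ 2 := by
          have hf1 : 0 ≤ x * (t ^ 2) * (μ ^ 2) :=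
            mul_nonneg (mul_nonneg hx0 (sq_nonneg t)) (sq_nonneg μ)
          have hf2 : 0 ≤ t * (S ^ 2 - x * (2 * μ) * S) :=
            mul_nonneg ht (by nlinarith)
          nlinarith [hf1, hf2]
        have h1' : 2 * (x - t) ≤ 2 * x * (μ * t - S) ^ 2 / S ^ 2 := by
          rw [le_div_iff₀ (by positivity : (0:ℝ) < S ^ 2)]
          linarith
        linarith
      · linarith
    have hle : (∫ t, |x - t| ∂Q) ≤ ∫ t, g t ∂Q := integral_mono_ae habs hg hae
    have hint : (∫ t, g t ∂Q) = A * S + B * μ + x := by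
      simp only [hgdef]
      rw [show (∫ t, (A * t ^ 2 + B * t + x) ∂Q)
          = (∫ t, (A * t ^ 2 + B * t) ∂Q) + ∫ _, x ∂Q from
        integral_add (hg1.add hg2) (integrable_const x),
        show (∫ t, (A * t ^ 2 + B * t) ∂Q) = (∫ t, A * t ^ 2 ∂Q) + ∫ t, B * t ∂Q from
        integral_add hg1 hg2, integral_const_mul, integral_const_mul, integral_const,
        hm1, hm2]
      simp
    have : A * S + B * μ + x = μ - x + 2 * x * σ ^ 2 / S := by
      simp only [hAdef, hBdef]
      field_simp
      ring
    rw [hint] at hle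
    exact hle.trans_eq this
  · -- attainment part
    intro Qs
    have hp0 : 0 ≤ σ ^ 2 / S := by positivity
    have hp1 : σ ^ 2 / S ≤ 1 := by
      rw [div_le_one hS]; nlinarith [sq_nonneg μ]
    have hm : 0 < S / μ := by positivity
    have hxm : x ≤ S / μ := by
      have : S / (2 * μ) ≤ S / μ := by
        apply div_le_div_of_nonneg_left hS.le hμ; linarith
      linarith [hx.le.trans this]
    refine ⟨?_, ?_, ?_, ?_, ?_, ?_, ?_⟩
    · constructor
      simp only [Qs, twoPoint, Measure.add_apply, Measure.smul_apply, smul_eq_mul,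
        Measure.dirac_apply_of_mem (mem_univ _), mul_one]
      rw [← ENNReal.ofReal_add hp0 (by linarith)]
      norm_num
    · have hcompl : (Set.Ici (0:ℝ))ᶜ = Set.Iio 0 := by simp
      rw [hcompl]
      simp only [Qs, twoPoint, Measure.add_apply, Measure.smul_apply, smul_eq_mul]
      rw [Measure.dirac_apply' _ measurableSet_Iio, Measure.dirac_apply' _ measurableSet_Iio]
      rw [indicator_of_notMem (by simp), indicator_of_notMem (by simp [not_lt, hm.le])]
      simp
    · exact integrable_twoPoint stronglyMeasurable_id _ _ _
    · exact integrable_twoPoint ((continuous_pow 2).stronglyMeasurable) _ _ _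
    · rw [integral_twoPoint (f := fun t : ℝ => t) _ _ hp0 hp1 stronglyMeasurable_id]
      field_simp
      ring
    · rw [integral_twoPoint _ _ hp0 hp1 ((continuous_pow 2).stronglyMeasurable)]
      field_simp
      ring
    · rw [integral_twoPoint (f := fun t : ℝ => |x - t|) _ _ hp0 hp1
        ((continuous_const.sub continuous_id).abs.stronglyMeasurable)]
      rw [sub_zero, abs_of_nonneg hx0, abs_of_nonpos (by linarith : x - S / μ ≤ 0)]
      field_simp
      ring
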